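/- arXiv:1410.4085 — 2 statements merged into one kernel-verified Lean document; each statement's English description precedes it below -/
import Mathlib

section
/- For every k ≥ 0, the sum over n from 2^k + 1 to 2^{k+1} of s(2n−1) equals 2·3^k, where s is Stern's diatomic sequence. -/
/-- Stern's diatomic sequence. -/
def stern : ℕ → ℕ
  | 0 => 0
  | 1 => 1
  | n + 2 =>
      if (n + 2) % 2 = 0 then stern ((n + 2) / 2)
      else stern ((n + 2) / 2) + stern ((n + 2) / 2 + 1)
decreasing_by all_goals omega

/-- Shortest palindrome having `w` as a prefix (right palindromic closure). -/
def palClosure (w : List Bool) : List Bool :=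
  let d := Nat.find (p := fun d => (w.drop d).reverse = w.drop d)
    ⟨w.length, by simp⟩
  w ++ (w.take d).reverse

/-- Iterated palindromic closure (palindromization map ψ). -/
def psi (v : List Bool) : List Bool :=
  v.foldl (fun w x => palClosure (w ++ [x])) []

/-- Minimal period of a word (`1` for the empty word). -/
def minPeriod (w : List Bool) : ℕ :=
  Nat.find (p := fun p => 1 ≤ p ∧ ∀ i < w.length, i + p < w.length → w[i]? = w[i + p]?)
    ⟨w.length + 1, by omega, fun i _ h => absurd h (by omega)⟩

/-- The morphism μ_x on a single letter. -/
def muLetter (x y : Bool) : List Bool := if y = x then [x] else [x, y]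

/-- Action of μ_x on a word. -/
def muL (x : Bool) (w : List Bool) : List Bool := w.flatMap (muLetter x)

/-- μ_v = μ_{x₁} ∘ ⋯ ∘ μ_{xₙ} for v = x₁⋯xₙ. -/
def muWord (v : List Bool) (w : List Bool) : List Bool := v.foldr muL w

/-- Fibonacci numbers shifted: `fibD k = F_{k-1}` where F_{-1}=F_0=1. -/
def fibD : ℕ → ℕ
  | 0 => 1
  | 1 => 1
  | n + 2 => fibD (n + 1) + fibD n

/-- Head-recursion helper for continuants. -/
def khead : List ℤ → ℤ
  | [] => 1
  | [a] => a
  | a :: b :: t => a * khead (b :: t) + khead t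

/-- Continuant K[a₀,…,aₙ]: K[]=1, K[a₀]=a₀, K[a₀,…,aₙ]=aₙK[a₀,…,a_{n-1}]+K[a₀,…,a_{n-2}]. -/
def contK (l : List ℤ) : ℤ := khead l.reverse

/-- Value of a little-endian list of binary digits. -/
def ofBits (l : List Bool) : ℕ := l.foldr (fun b n => 2 * n + (if b then 1 else 0)) 0

/-- The integer obtained by reversing the binary expansion of `n`. -/
def binRev (n : ℕ) : ℕ := ofBits n.bits.reverse

/-- The word b(ab)^m over {a,b} ≃ {false,true}. -/
def altPat : ℕ → List Bool
  | 0 => [true]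
  | m + 1 => altPat m ++ [false, true]


lemma stern_two_mul (n : ℕ) : stern (2 * n) = stern n := by
  match n with
  | 0 => rfl
  | n + 1 =>
    have h : 2 * (n + 1) = (2 * n) + 2 := by ring
    rw [h, stern]
    have : (2 * n + 2) % 2 = 0 := by omega
    rw [if_pos this]
    congr 1
    omega

lemma stern_two_mul_add_one (n : ℕ) : stern (2 * n + 1) = stern n + stern (n + 1) := by
  match n with
  | 0 => simp [stern]
  | n + 1 =>
    have h : 2 * (n + 1) + 1 = (2 * n + 1) + 2 := by ring
    rw [h, stern]
    have : (2 * n + 1 + 2) % 2 = 1 := by omega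
    rw [this]
    have h2 : (2 * n + 1 + 2) / 2 = n + 1 := by omega
    simp [h2]

lemma sum_range_two_mul {M : Type*} [AddCommMonoid M] (n : ℕ) (f : ℕ → M) :
    ∑ i ∈ Finset.range (2 * n), f i = ∑ i ∈ Finset.range n, (f (2 * i) + f (2 * i + 1)) := by
  induction n with
  | zero => simp
  | succ n ih =>
    have h : 2 * (n + 1) = (2 * n + 1) + 1 := by ring
    rw [h, Finset.sum_range_succ, Finset.sum_range_succ, ih, Finset.sum_range_succ]
    abel

lemma stern_pow (k : ℕ) : stern (2 ^ k) = 1 := by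
  induction k with
  | zero => simp [stern]
  | succ k ih => rw [pow_succ, mul_comm, stern_two_mul, ih]

lemma stern_row_sum (k : ℕ) : ∑ i ∈ Finset.range (2 ^ k), stern (2 ^ k + i) = 3 ^ k := by
  induction k with
  | zero => simp [stern]
  | succ k ih =>
    have hshift : ∑ i ∈ Finset.range (2 ^ k), stern (2 ^ k + i + 1)
        = ∑ i ∈ Finset.range (2 ^ k), stern (2 ^ k + i) := by
      have key := Finset.sum_range_succ' (fun i => stern (2 ^ k + i)) (2 ^ k)
      rw [Finset.sum_range_succ] at key
      simp only [← Nat.add_assoc, Nat.add_zero] at key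
      have hp : (2 : ℕ) ^ k + 2 ^ k = 2 ^ (k + 1) := by ring
      rw [hp] at key
      rw [stern_pow] at key
      rw [stern_pow] at key
      omega
    have h2 : (2 : ℕ) ^ (k + 1) = 2 * 2 ^ k := by ring
    rw [h2, sum_range_two_mul]
    have : ∀ i ∈ Finset.range (2 ^ k),
        stern (2 * 2 ^ k + 2 * i) + stern (2 * 2 ^ k + (2 * i + 1))
        = 2 * stern (2 ^ k + i) + stern (2 ^ k + i + 1) := by
      intro i _
      have e1 : 2 * 2 ^ k + 2 * i = 2 * (2 ^ k + i) := by ring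
      have e2 : 2 * 2 ^ k + (2 * i + 1) = 2 * (2 ^ k + i) + 1 := by ring
      rw [e1, e2, stern_two_mul, stern_two_mul_add_one]
      omega
    rw [Finset.sum_congr rfl this, Finset.sum_add_distrib, hshift, ← Finset.mul_sum, ih]
    ring

theorem stern_odd_row_sum (k : ℕ) :
    ∑ n ∈ Finset.Icc (2 ^ k + 1) (2 ^ (k + 1)), stern (2 * n - 1) = 2 * 3 ^ k := by
  have himg : Finset.Icc (2 ^ k + 1) (2 ^ (k + 1))
      = Finset.image (fun i => 2 ^ k + 1 + i) (Finset.range (2 ^ k)) := by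
    ext m
    simp only [Finset.mem_Icc, Finset.mem_image, Finset.mem_range]
    constructor
    · intro ⟨h1, h2⟩
      exact ⟨m - (2 ^ k + 1), by have : (2:ℕ) ^ (k+1) = 2 * 2 ^ k := by ring
                                 omega, by omega⟩
    · rintro ⟨i, hi, rfl⟩
      have : (2:ℕ) ^ (k+1) = 2 * 2 ^ k := by ring
      omega
  rw [himg, Finset.sum_image (by intro a _ b _ h; simp only at h; omega)]
  have : ∀ i ∈ Finset.range (2 ^ k),
      stern (2 * (2 ^ k + 1 + i) - 1) = stern (2 ^ k + i) + stern (2 ^ k + i + 1) := by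
    intro i _
    have e : 2 * (2 ^ k + 1 + i) - 1 = 2 * (2 ^ k + i) + 1 := by omega
    rw [e, stern_two_mul_add_one]
  rw [Finset.sum_congr rfl this, Finset.sum_add_distrib, stern_row_sum]
  have hshift : ∑ i ∈ Finset.range (2 ^ k), stern (2 ^ k + i + 1)
      = ∑ i ∈ Finset.range (2 ^ k), stern (2 ^ k + i) := by
    have key := Finset.sum_range_succ' (fun i => stern (2 ^ k + i)) (2 ^ k)
    rw [Finset.sum_range_succ] at key
    simp only [← Nat.add_assoc, Nat.add_zero] at key
    have hp : (2 : ℕ) ^ k + 2 ^ k = 2 ^ (k + 1) := by ring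
    rw [hp] at key
    rw [stern_pow] at key
    rw [stern_pow] at key
    omega
  rw [hshift, stern_row_sum]
  ring
end

section
/- For every word v over {a,b}, |ψ(v)| + 2 = |μ_v(a)| + |μ_v(b)|, where ψ is the iterated palindromic closure and μ_v the associated Sturmian morphism. -/
open List

/-! ### palindromic closure basics -/

def pd (w : List Bool) : ℕ :=
  Nat.find (p := fun d => (w.drop d).reverse = w.drop d) ⟨w.length, by simp⟩

lemma palClosure_eq (w : List Bool) : palClosure w = w ++ (w.take (pd w)).reverse := rfl

lemma pd_spec (w : List Bool) : (w.drop (pd w)).reverse = w.drop (pd w) :=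
  Nat.find_spec (p := fun d => (w.drop d).reverse = w.drop d) ⟨w.length, by simp⟩

lemma pd_min {w : List Bool} {e : ℕ} (h : (w.drop e).reverse = w.drop e) : pd w ≤ e :=
  Nat.find_min' _ h

lemma pd_le (w : List Bool) : pd w ≤ w.length := pd_min (by simp)

lemma pc_prefix (w : List Bool) : w <+: palClosure w := ⟨_, (palClosure_eq w).symm⟩

lemma pc_palindrome (w : List Bool) : (palClosure w).reverse = palClosure w := by
  rw [palClosure_eq, reverse_append, reverse_reverse]
  have hw : w.reverse = w.drop (pd w) ++ (w.take (pd w)).reverse := by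
    conv_lhs => rw [← take_append_drop (pd w) w]
    rw [reverse_append, pd_spec]
  rw [hw, ← append_assoc, take_append_drop]

lemma pc_length (w : List Bool) : (palClosure w).length = w.length + pd w := by
  rw [palClosure_eq]; simp [length_take, Nat.min_eq_left (pd_le w)]

/-- key computation for palindromes extending `w` by a short tail -/
lemma tail_eq {w t : List Bool} (hp : (w ++ t).reverse = w ++ t)
    (hle : t.length ≤ w.length) : t = (w.take t.length).reverse ∧ pd w ≤ t.length := by
  have h1 : t.reverse ++ w.reverse = w ++ t := by rw [← reverse_append, hp]
  -- claim1 : w.reverse = w.drop t.length ++ t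
  have c1 : w.reverse = w.drop t.length ++ t := by
    have h2 := congrArg (fun l => l.drop t.length) h1
    rw [List.drop_left' (by simp), drop_append_of_le_length hle] at h2
    exact h2
  -- claim2 : drop e w is a palindrome
  have c2 : (w.drop t.length).reverse = w.drop t.length := by
    have h2 := congrArg (fun l => l.reverse.drop t.length) c1
    simp only [reverse_reverse, reverse_append] at h2
    rw [List.drop_left' (by simp)] at h2
    conv_lhs at h2 => rw [← take_append_drop t.length w]
    rw [List.drop_left' (by simp [Nat.min_eq_left hle])] at h2
    exact h2.symm
  have hpd : pd w ≤ t.length := pd_min c2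
  refine ⟨?_, hpd⟩
  have c3 : w.reverse = w.drop t.length ++ (w.take t.length).reverse := by
    conv_lhs => rw [← take_append_drop t.length w, reverse_append, c2]
  rw [c3] at c1
  exact (append_cancel_left c1.symm)

lemma pc_le {w p : List Bool} (hp : p.reverse = p) (hw : w <+: p) :
    w.length + pd w ≤ p.length := by
  obtain ⟨t, rfl⟩ := hw
  rcases le_or_gt t.length w.length with h | h
  · have := (tail_eq hp h).2; simp; omega
  · have := pd_le w; simp; omega

lemma pc_unique {w p : List Bool} (hp : p.reverse = p) (hw : w <+: p)
    (hl : p.length ≤ w.length + pd w) : p = palClosure w := by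
  obtain ⟨t, rfl⟩ := hw
  have hle : t.length ≤ w.length := by
    have := pd_le w; simp at hl; omega
  have h1 := (tail_eq hp hle).1
  have h2 := (tail_eq hp hle).2
  have ht : t.length = pd w := by simp at hl; omega
  rw [palClosure_eq, h1, ht]

lemma pc_count {w p : List Bool} (hp : p.reverse = p) (hw : w <+: p) (y : Bool) :
    (palClosure w).count y ≤ p.count y := by
  obtain ⟨t, rfl⟩ := hw
  rw [palClosure_eq, count_append, count_append, count_reverse]
  have hsub : (w.take (pd w)).count y ≤ w.count y :=
    (take_sublist _ _).count_le y
  rcases le_or_gt t.length w.length with h | h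
  · obtain ⟨h1, h2⟩ := tail_eq hp h
    rw [h1, count_reverse]
    have : w.take (pd w) <+: w.take t.length := by
      rw [show pd w = min (pd w) t.length by omega, ← take_take]
      exact take_prefix _ _
    exact Nat.add_le_add_left (this.sublist.count_le y) _
  · -- w.reverse is a suffix of t
    have hsuf : w.reverse <:+ w ++ t := ⟨t.reverse, by rw [← reverse_append, hp]⟩
    have hsuf2 : t <:+ w ++ t := suffix_append w t
    have : w.reverse <:+ t := by
      rcases suffix_or_suffix_of_suffix hsuf hsuf2 with h' | h'
      · exact h'
      · have := h'.length_le; simp at this; omega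
    have := this.sublist.count_le y
    simp only [count_reverse] at this
    omega

/-! ### morphism lemmas -/

lemma muL_nil (x : Bool) : muL x [] = [] := rfl

lemma muL_cons (x y : Bool) (s : List Bool) :
    muL x (y :: s) = muLetter x y ++ muL x s := rfl

lemma muL_append (x : Bool) (s t : List Bool) :
    muL x (s ++ t) = muL x s ++ muL x t := by simp [muL]

lemma muL_singleton_self (x : Bool) : muL x [x] = [x] := by simp [muL, muLetter]

lemma muLetter_head (x y : Bool) : ∃ r, muLetter x y = x :: r := by
  by_cases h : y = x <;> simp [muLetter, h]

lemma muL_head (x : Bool) {s : List Bool} (hs : s ≠ []) : ∃ r, muL x s = x :: r := by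
  cases s with
  | nil => simp at hs
  | cons y t =>
    obtain ⟨r, hr⟩ := muLetter_head x y
    exact ⟨r ++ muL x t, by rw [muL_cons, hr]; rfl⟩

lemma muLx_head (x : Bool) (s : List Bool) : ∃ r, muL x s ++ [x] = x :: r := by
  cases s with
  | nil => exact ⟨[], rfl⟩
  | cons y t =>
    obtain ⟨r, hr⟩ := muL_head x (s := y :: t) (by simp)
    exact ⟨r ++ [x], by rw [hr]; rfl⟩

lemma muL_ne_not_cons (x : Bool) (t r : List Bool) : muL x t ≠ (!x) :: r := by
  cases t with
  | nil => simp [muL_nil]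
  | cons y u =>
    obtain ⟨r', hr⟩ := muL_head x (s := y :: u) (by simp)
    rw [hr]; simp

lemma muL_reverse (x : Bool) (s : List Bool) :
    (muL x s ++ [x]).reverse = muL x s.reverse ++ [x] := by
  induction s with
  | nil => rfl
  | cons y t ih =>
    rw [muL_cons, append_assoc, reverse_append, ih, reverse_cons, muL_append]
    by_cases h : y = x <;> simp [muLetter, h, muL, append_assoc]

lemma muL_injective (x : Bool) : ∀ {s s' : List Bool}, muL x s = muL x s' → s = s' := by
  intro s
  induction s with
  | nil =>
    intro s' h
    cases s' with
    | nil => rfl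
    | cons y t =>
      obtain ⟨r, hr⟩ := muL_head x (s := y :: t) (by simp)
      rw [muL_nil, hr] at h; exact absurd h (by simp)
  | cons y t ih =>
    intro s' h
    cases s' with
    | nil =>
      obtain ⟨r, hr⟩ := muL_head x (s := y :: t) (by simp)
      rw [muL_nil, hr] at h; exact absurd h.symm (by simp)
    | cons y' t' =>
      rw [muL_cons, muL_cons] at h
      rcases eq_or_ne y x with hy | hy <;> rcases eq_or_ne y' x with hy' | hy'
      · rw [hy, hy']; congr 1
        apply ih; simpa [muLetter, hy, hy'] using h
      · exfalso
        rw [show muLetter x y = [x] by simp [muLetter, hy],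
          show muLetter x y' = [x, y'] by simp [muLetter, hy']] at h
        simp only [singleton_append, cons_append, cons.injEq, true_and] at h
        have hy'2 : y' = !x := by cases y' <;> cases x <;> simp_all
        rw [hy'2] at h
        exact muL_ne_not_cons x t _ h
      · exfalso
        rw [show muLetter x y = [x, y] by simp [muLetter, hy],
          show muLetter x y' = [x] by simp [muLetter, hy']] at h
        simp only [singleton_append, cons_append, cons.injEq, true_and] at h
        have hy2 : y = !x := by cases y <;> cases x <;> simp_all
        rw [hy2] at h
        exact muL_ne_not_cons x t' _ h.symm
      · have hyy : y = y' := by cases y <;> cases y' <;> cases x <;> simp_all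
        subst hyy
        congr 1
        exact ih (append_cancel_left h)

lemma muL_prefix_decode (x : Bool) :
    ∀ {u s : List Bool}, muL x u ++ [x] <+: muL x s ++ [x] → u <+: s := by
  intro u
  induction u with
  | nil => intro s _; exact nil_prefix
  | cons y t ih =>
    intro s h
    cases s with
    | nil =>
      have := h.length_le
      rw [muL_cons] at this
      obtain ⟨r, hr⟩ := muLetter_head x y
      rw [hr] at this
      simp [muL_nil] at this
    | cons y' t' =>
      rw [muL_cons, muL_cons] at h
      rcases eq_or_ne y x with hy | hy <;> rcases eq_or_ne y' x with hy' | hy'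
      · rw [hy, hy']
        rw [show muLetter x y = [x] by simp [muLetter, hy],
          show muLetter x y' = [x] by simp [muLetter, hy']] at h
        rw [singleton_append, singleton_append] at h
        exact cons_prefix_cons.mpr ⟨rfl, ih (cons_prefix_cons.mp h).2⟩
      · exfalso
        rw [show muLetter x y = [x] by simp [muLetter, hy],
          show muLetter x y' = [x, y'] by simp [muLetter, hy']] at h
        simp only [singleton_append, cons_append, cons_prefix_cons, true_and,
          nil_append] at h
        obtain ⟨r, hr⟩ := muLx_head x t
        rw [hr] at h
        have := (cons_prefix_cons.mp h).1
        exact hy' (by cases y' <;> cases x <;> simp_all)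
      · exfalso
        rw [show muLetter x y = [x, y] by simp [muLetter, hy],
          show muLetter x y' = [x] by simp [muLetter, hy']] at h
        simp only [singleton_append, cons_append, cons_prefix_cons, true_and,
          nil_append] at h
        obtain ⟨r, hr⟩ := muLx_head x t'
        rw [hr] at h
        have := (cons_prefix_cons.mp h).1
        exact hy (by cases y <;> cases x <;> simp_all)
      · have hyy : y = y' := by cases y <;> cases y' <;> cases x <;> simp_all
        subst hyy
        rw [show muLetter x y = [x, y] by simp [muLetter, hy]] at h
        simp only [cons_append, cons_prefix_cons, true_and, nil_append,
          append_assoc, singleton_append] at h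
        exact cons_prefix_cons.mpr ⟨rfl, ih h⟩

/-! ### chain structure of morphic images -/

lemma muL_chain (x : Bool) (s : List Bool) :
    (muL x s ++ [x]).Chain' (fun a b => a = x ∨ b = x) := by
  induction s with
  | nil => simp [muL_nil]; exact isChain_singleton _
  | cons y t ih =>
    rw [muL_cons, append_assoc, List.Chain', isChain_append]
    refine ⟨?_, ih, ?_⟩
    · by_cases h : y = x <;> simp [muLetter, h]
    · intro a _ b hb
      obtain ⟨r, hr⟩ := muLx_head x t
      rw [hr] at hb
      simp at hb
      exact Or.inr hb.symm

/-- decoding function for images of μ_x -/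
def dec (x : Bool) : List Bool → List Bool
  | [] => []
  | [_] => [x]
  | _ :: b :: t => if b = x then x :: dec x (b :: t) else (!x) :: dec x t

lemma dec_spec (x : Bool) : ∀ (n : ℕ) (r : List Bool), r.length ≤ n →
    (r = [] ∨ r.head? = some x) → r.Chain' (fun a b => a = x ∨ b = x) →
    muL x (dec x r) = r := by
  intro n
  induction n with
  | zero =>
    intro r hr _ _
    rw [Nat.le_zero, length_eq_zero_iff] at hr
    rw [hr]; rfl
  | succ n ih =>
    intro r hr hh hc
    match r with
    | [] => rfl
    | [a] =>
      simp only [head?_cons, Option.some.injEq, false_or, reduceCtorEq] at hh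
      have hd : dec x [a] = [x] := rfl
      rw [hd, muL_singleton_self, hh]
    | a :: b :: t =>
      simp only [head?_cons, Option.some.injEq, false_or, reduceCtorEq] at hh
      have hd : dec x (a :: b :: t) =
          if b = x then x :: dec x (b :: t) else (!x) :: dec x t := rfl
      by_cases hb : b = x
      · rw [hd, if_pos hb, muL_cons, show muLetter x x = [x] by simp [muLetter]]
        rw [ih (b :: t) (by simp at hr ⊢; omega) (Or.inr (by rw [hb]; rfl)) hc.tail]
        rw [hh]; rfl
      · have hbx : b = !x := by cases b <;> cases x <;> simp_all
        have hth : t = [] ∨ t.head? = some x := by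
          cases t with
          | nil => left; rfl
          | cons c u =>
            right
            rcases hc.tail.rel_head with h | h
            · exact absurd h hb
            · rw [h]; rfl
        rw [hd, if_neg hb, muL_cons, show muLetter x (!x) = [x, !x] by simp [muLetter]]
        rw [ih t (by simp at hr ⊢; omega) hth hc.tail.tail]
        rw [hh, hbx]; rfl

/-! ### counting -/

lemma clen (l : List Bool) : l.length = l.count true + l.count false := by
  induction l with
  | nil => simp
  | cons y t ih =>
    rw [length_cons, count_cons, count_cons, ih]
    cases y <;> simp <;> omega

lemma count_len (l : List Bool) (x : Bool) : l.length = l.count x + l.count (!x) := by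
  cases x
  · rw [clen]; simp [Nat.add_comm]
  · rw [clen]; simp

lemma muL_len2 (x : Bool) (r : List Bool) :
    (muL x r).length = r.count x + 2 * r.count (!x) := by
  induction r with
  | nil => simp [muL_nil]
  | cons y t ih =>
    rw [muL_cons, length_append, ih, count_cons, count_cons]
    cases x <;> cases y <;> simp [muLetter] <;> omega

/-! ### the core argument -/

lemma core_lemma (x : Bool) (u s warg : List Bool) (hs : s.reverse = s) (hus : u <+: s)
    (hq : palClosure warg = muL x s ++ [x])
    (hwp : warg <+: muL x (palClosure u) ++ [x]) :
    palClosure warg = muL x (palClosure u) ++ [x] := by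
  have hp : (muL x (palClosure u) ++ [x]).reverse = muL x (palClosure u) ++ [x] := by
    rw [muL_reverse, pc_palindrome]
  have hlen : (muL x (palClosure u) ++ [x]).length ≤ warg.length + pd warg := by
    rw [← pc_length, hq]
    simp only [length_append, length_cons, length_nil]
    rw [muL_len2, muL_len2]
    have h1 := pc_count hs hus x
    have h2 := pc_count hs hus (!x)
    omega
  exact (pc_unique hp hwp hlen).symm

lemma short_rev (l : List Bool) (h : l.length ≤ 1) : l.reverse = l := by
  cases l with
  | nil => rfl
  | cons a t => simp at h; subst h; rfl

/-- decoding the palindromic closure of a morphic word -/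
lemma pc_decode (x : Bool) (warg : List Bool)
    (hh : warg.head? = some x)
    (hchain : (palClosure warg).Chain' (fun a b => a = x ∨ b = x)) :
    ∃ s, palClosure warg = muL x s ++ [x] ∧ s.reverse = s := by
  have hlast : (palClosure warg).getLast? = some x := by
    have hqh : (palClosure warg).head? = some x := by
      obtain ⟨t0, ht0⟩ := pc_prefix warg
      rw [← ht0, head?_append_of_ne_nil _ (by intro h; rw [h] at hh; simp at hh), hh]
    rw [← pc_palindrome warg, getLast?_reverse, hqh]
  set q := palClosure warg with hqdef
  have hqne : q ≠ [] := by
    intro h; rw [h] at hlast; simp at hlast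
  have hgl : q.getLast hqne = x := by
    rw [getLast?_eq_getLast hqne] at hlast
    exact Option.some_inj.mp hlast
  have hsplit : q.dropLast ++ [x] = q := by
    conv_rhs => rw [← dropLast_append_getLast hqne, hgl]
  have hqh : q.head? = some x := by
    obtain ⟨t0, ht0⟩ := pc_prefix warg
    rw [hqdef, ← ht0, head?_append_of_ne_nil _ (by intro h; rw [h] at hh; simp at hh), hh]
  have hrh : q.dropLast = [] ∨ q.dropLast.head? = some x := by
    rcases eq_or_ne q.dropLast [] with h | h
    · exact Or.inl h
    · right
      rw [← head?_append_of_ne_nil (l₂ := [x]) _ h, hsplit]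
      exact hqh
  have hrc := hchain.prefix (dropLast_prefix q)
  have hmu := dec_spec x q.dropLast.length q.dropLast le_rfl hrh hrc
  refine ⟨dec x q.dropLast, by rw [hmu, hsplit], ?_⟩
  have hpal := pc_palindrome warg
  rw [← hqdef] at hpal
  rw [← hsplit, ← hmu, muL_reverse] at hpal
  exact muL_injective x (append_cancel_right hpal)

/-! ### the two commutation lemmas -/

lemma prefix_x_muLx (x : Bool) (t : List Bool) : [x] <+: muL x t ++ [x] := by
  obtain ⟨r, hr⟩ := muLx_head x t
  rw [hr]
  exact ⟨r, rfl⟩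

lemma warg_prefix_p (x : Bool) (u : List Bool) :
    muL x u ++ [x] <+: muL x (palClosure u) ++ [x] := by
  obtain ⟨t, ht⟩ := pc_prefix u
  rw [← ht, muL_append, append_assoc]
  obtain ⟨r, hr⟩ := prefix_x_muLx x t
  exact ⟨r, by rw [← hr, ← append_assoc]⟩

lemma lemB (x : Bool) (u : List Bool) :
    palClosure (muL x u ++ [x]) = muL x (palClosure u) ++ [x] := by
  set warg := muL x u ++ [x] with hwargdef
  have hh : warg.head? = some x := by
    obtain ⟨r, hr⟩ := muLx_head x u
    rw [hwargdef, hr]; rfl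
  have hchain : (palClosure warg).Chain' (fun a b => a = x ∨ b = x) := by
    rw [palClosure_eq, List.Chain', isChain_append]
    refine ⟨muL_chain x u, ?_, ?_⟩
    · rw [isChain_reverse]
      exact ((muL_chain x u).prefix (take_prefix _ _)).imp (fun a b hab => hab.symm)
    · intro a ha b _
      rw [hwargdef, getLast?_concat] at ha
      simp at ha
      exact Or.inl ha.symm
  obtain ⟨s, hqs, hsrev⟩ := pc_decode x warg hh hchain
  have hus : u <+: s :=
    muL_prefix_decode x (by rw [← hqs, ← hwargdef]; exact pc_prefix warg)
  exact core_lemma x u s warg hsrev hus hqs (warg_prefix_p x u)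

lemma lemB' (x : Bool) (u : List Bool) (hu : u.getLast? = some (!x)) :
    palClosure (muL x u) = muL x (palClosure u) ++ [x] := by
  have hune : u ≠ [] := by intro h; rw [h] at hu; simp at hu
  set warg := muL x u with hwargdef
  have hwsplit : warg = (muL x u.dropLast ++ [x]) ++ [!x] := by
    conv_lhs => rw [hwargdef, ← dropLast_append_getLast hune]
    rw [Option.some_inj.mp ((getLast?_eq_getLast hune).symm.trans hu), muL_append]
    rw [show muL x [!x] = [x, !x] by simp [muL, muLetter, Bool.not_ne_self]]
    simp [append_assoc]
  have hh : warg.head? = some x := by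
    obtain ⟨r, hr⟩ := muL_head x hune
    rw [hwargdef, hr]; rfl
  have hwne : warg ≠ [] := by intro h; rw [h] at hh; simp at hh
  have hwlen : 1 ≤ warg.length := length_pos_iff.mpr hwne
  have hwlast : warg.getLast? = some (!x) := by rw [hwsplit, getLast?_concat]
  have hwchain : warg.Chain' (fun a b => a = x ∨ b = x) :=
    (muL_chain x u).prefix ⟨[x], rfl⟩
  -- pd warg ≥ 1
  have he1 : 1 ≤ pd warg := by
    by_contra h
    have h0 : pd warg = 0 := by omega
    have hpal := pd_spec warg
    rw [h0, drop_zero] at hpal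
    have : warg.head? = warg.getLast? := by
      rw [← head?_reverse (l := warg), hpal]
    rw [hh, hwlast] at this
    have := Option.some_inj.mp this
    exact Bool.not_ne_self x this.symm
  -- pd warg < warg.length
  have helen : pd warg < warg.length := by
    have h1 : pd warg ≤ warg.length - 1 :=
      pd_min (short_rev _ (by rw [length_drop]; omega))
    omega
  -- head of the dropped (palindromic) part is !x
  have hPne : warg.drop (pd warg) ≠ [] := by
    intro h
    have := congrArg List.length h
    rw [length_drop] at this
    simp only [length_nil] at this
    omega
  have hPhead : (warg.drop (pd warg)).head? = some (!x) := by
    rw [← pd_spec warg, head?_reverse]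
    rw [← getLast?_append_of_ne_nil (warg.take (pd warg)) hPne, take_append_drop]
    exact hwlast
  -- last of the kept part is x
  have hTne : warg.take (pd warg) ≠ [] := by
    intro h
    have := congrArg List.length h
    rw [length_take] at this
    simp only [length_nil] at this
    omega
  have hTlast : (warg.take (pd warg)).getLast? = some x := by
    have hsplitc : warg.Chain' (fun a b => a = x ∨ b = x) := hwchain
    rw [← take_append_drop (pd warg) warg, List.Chain', isChain_append] at hsplitc
    obtain ⟨-, -, hj⟩ := hsplitc
    rw [getLast?_eq_getLast hTne]
    congr 1
    rcases hj _ (getLast?_eq_getLast hTne) (!x) hPhead with h | h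
    · exact h
    · exact absurd h (by cases x <;> simp)
  have hrevhead : ((warg.take (pd warg)).reverse).head? = some x := by
    rw [head?_reverse, hTlast]
  -- chain of the closure
  have hchain : (palClosure warg).Chain' (fun a b => a = x ∨ b = x) := by
    rw [palClosure_eq, List.Chain', isChain_append]
    refine ⟨hwchain, ?_, ?_⟩
    · rw [isChain_reverse]
      exact (hwchain.prefix (take_prefix _ _)).imp (fun a b hab => hab.symm)
    · intro a ha b hb
      rw [hwlast] at ha
      rw [hrevhead] at hb
      simp at ha hb
      exact Or.inr hb.symm
  obtain ⟨s, hqs, hsrev⟩ := pc_decode x warg hh hchain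
  -- u is a prefix of s
  have hwx : warg ++ [x] <+: palClosure warg := by
    obtain ⟨rest, hrest⟩ : ∃ rest, (warg.take (pd warg)).reverse = x :: rest := by
      cases hrev : (warg.take (pd warg)).reverse with
      | nil => rw [hrev] at hrevhead; simp at hrevhead
      | cons c cs =>
        rw [hrev] at hrevhead
        simp at hrevhead
        exact ⟨cs, by rw [hrevhead]⟩
    rw [palClosure_eq, hrest]
    exact ⟨rest, by simp⟩
  have hus : u <+: s := by
    apply muL_prefix_decode x
    rw [← hqs]
    exact hwx
  exact core_lemma x u s warg hsrev hus hqs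
    ((prefix_append warg [x]).trans (by rw [hwargdef]; exact warg_prefix_p x u))

/-! ### Justin's formula -/

lemma psi_concat (l : List Bool) (z : Bool) :
    psi (l ++ [z]) = palClosure (psi l ++ [z]) := by
  unfold psi
  rw [foldl_concat]

lemma pc_singleton (x : Bool) : palClosure [x] = [x] := by
  have h0 : pd [x] = 0 := Nat.le_zero.mp (pd_min (by simp))
  rw [palClosure_eq, h0]
  simp

lemma justin (x : Bool) (v : List Bool) : psi (x :: v) = muL x (psi v) ++ [x] := by
  induction v using List.reverseRecOn with
  | nil =>
    show psi ([] ++ [x]) = muL x (psi []) ++ [x]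
    rw [psi_concat]
    show palClosure ([] ++ [x]) = muL x [] ++ [x]
    rw [nil_append, pc_singleton, muL_nil, nil_append]
  | append_singleton v z ih =>
    have hstep : psi (x :: (v ++ [z])) = palClosure ((muL x (psi v) ++ [x]) ++ [z]) := by
      rw [show x :: (v ++ [z]) = (x :: v) ++ [z] by simp, psi_concat, ih]
    rcases eq_or_ne z x with hz | hz
    · rw [hstep, hz, show (muL x (psi v) ++ [x]) ++ [x] = muL x (psi v ++ [x]) ++ [x] by
        rw [muL_append, muL_singleton_self]]
      rw [lemB x (psi v ++ [x]), ← psi_concat]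
    · have hzx : z = !x := by cases z <;> cases x <;> simp_all
      rw [hstep, hzx, show (muL x (psi v) ++ [x]) ++ [!x] = muL x (psi v ++ [!x]) by
        rw [muL_append, show muL x [!x] = [x, !x] by simp [muL, muLetter, Bool.not_ne_self],
          append_assoc]; rfl]
      rw [lemB' x (psi v ++ [!x]) getLast?_concat, ← psi_concat]

/-! ### counting through the morphism -/

lemma muL_count_self (x : Bool) (s : List Bool) : (muL x s).count x = s.length := by
  induction s with
  | nil => simp [muL_nil]
  | cons y t ih =>
    rw [muL_cons, count_append, ih, length_cons]
    cases x <;> cases y <;> simp [muLetter] <;> omega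

lemma muL_count_not (x : Bool) (s : List Bool) : (muL x s).count (!x) = s.count (!x) := by
  induction s with
  | nil => simp [muL_nil]
  | cons y t ih =>
    rw [muL_cons, count_append, ih, count_cons]
    cases x <;> cases y <;> simp [muLetter] <;> omega

lemma psi_count (v : List Bool) :
    ∀ y, (psi v).count y + 1 =
      (muWord v [false]).count y + (muWord v [true]).count y := by
  induction v with
  | nil =>
    intro y
    show count y [] + 1 = count y [false] + count y [true]
    cases y <;> simp
  | cons x v ih =>
    intro y
    have hmw : ∀ c, muWord (x :: v) [c] = muL x (muWord v [c]) := fun _ => rfl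
    rw [justin x v, hmw, hmw, count_append]
    rcases eq_or_ne y x with hy | hy
    · subst hy
      rw [muL_count_self, muL_count_self, muL_count_self]
      have h1 := ih y
      have h2 := ih (!y)
      have l0 := count_len (psi v) y
      have l1 := count_len (muWord v [false]) y
      have l2 := count_len (muWord v [true]) y
      simp
      omega
    · have hyx : y = !x := by cases y <;> cases x <;> simp_all
      subst hyx
      rw [muL_count_not, muL_count_not, muL_count_not]
      have h2 := ih (!x)
      have : count (!x) [x] = 0 := by cases x <;> simp
      omega

theorem psi_length_add_two (v : List Bool) :
    (psi v).length + 2 = (muWord v [false]).length + (muWord v [true]).length := by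
  have h1 := psi_count v true
  have h2 := psi_count v false
  have l0 := count_len (psi v) true
  have l1 := count_len (muWord v [false]) true
  have l2 := count_len (muWord v [true]) true
  simp only [Bool.not_true] at l0 l1 l2
  omega
end
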